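/- Let k be a positive integer and M a subset of F_2^n containing the zero vector and a basis of F_2^n. If 2k < |M| < 2^{n/k} · ((k-1)!)^{1/k}, then there exists a subset K of M with |K| = k+1 such that no sum of two or more distinct vectors of K lies in M. -/

import Mathlib

/-!
Fewer than `2 ^ n` vectors are sums of at most `k` nonzero elements of `M`, because
`(k - 1)! * ∑_{j ≤ k} C(|M| - 1, j) ≤ |M| ^ k`. Pick a vector `x` that is not such a short
sum. Since `M` spans, `x` is the sum of some `T ⊆ M`; take `T` of minimal size, so that
`|T| ≥ k + 1`.
If a sub-sum `w` of at least two elements of `T` lay in `M`, replacing those elements by `w`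
(or cancelling `w` against itself, if `w` is already among the remaining terms) would give a
shorter representation of `x`. Any `k + 1` elements of `T` therefore form the required `K`.
-/

open Finset Nat

theorem factorial_pred_mul_sum_range_choose_le_pow {k N : ℕ} (hkN : k ≤ N + 1) :
    (k - 1)! * ∑ j ∈ range (k + 1), N.choose j ≤ (N + 1) ^ k := by
  induction k with
  | zero => simp
  | succ k ih =>
    rcases Nat.eq_zero_or_pos k with rfl | hk0
    · simp [sum_range_succ, add_comm]
    have hS := ih (by omega)
    have hdesc : (k + 1)! * N.choose (k + 1) ≤ (N - k) * (N + 1) ^ k := by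
      rw [← descFactorial_eq_factorial_mul_choose, descFactorial_succ]
      exact Nat.mul_le_mul_left _
        ((descFactorial_le_pow N k).trans (Nat.pow_le_pow_left N.le_succ k))
    have hcoeff : (k + 1) * k + (N - k) ≤ (k + 1) * (N + 1) := by
      zify [show k ≤ N by omega]
      nlinarith
    refine Nat.le_of_mul_le_mul_left ?_ k.succ_pos
    calc (k + 1) * ((k + 1 - 1)! * ∑ j ∈ range (k + 1 + 1), N.choose j)
        = (k + 1) * k * ((k - 1)! * ∑ j ∈ range (k + 1), N.choose j)
          + (k + 1)! * N.choose (k + 1) := by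
          rw [Nat.add_sub_cancel, sum_range_succ, factorial_succ, ← mul_factorial_pred hk0.ne']
          ring
      _ ≤ (k + 1) * k * (N + 1) ^ k + (N - k) * (N + 1) ^ k := by gcongr
      _ = ((k + 1) * k + (N - k)) * (N + 1) ^ k := by ring
      _ ≤ (k + 1) * (N + 1) * (N + 1) ^ k := by gcongr
      _ = (k + 1) * (N + 1) ^ (k + 1) := by ring

theorem card_filter_card_le_powerset_eq_sum_choose {α : Type*} [DecidableEq α] (A : Finset α)
    (k : ℕ) :
    #{T ∈ A.powerset | #T ≤ k} = ∑ j ∈ range (k + 1), (#A).choose j := by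
  have : {T ∈ A.powerset | #T ≤ k} = (range (k + 1)).biUnion (powersetCard · A) := by
    ext T
    simp [mem_powersetCard, and_comm]
  rw [this, card_biUnion fun i _ j _ hij => A.pairwise_disjoint_powersetCard hij]
  simp [card_powersetCard]

section ZModTwo

variable {V : Type*} [AddCommGroup V] [Module (ZMod 2) V] [DecidableEq V]

theorem exists_min_card_subset_sum_eq {M : Finset V} {x : V}
    (hx : x ∈ Submodule.span (ZMod 2) (M : Set V)) :
    ∃ T ⊆ M, ∑ v ∈ T, v = x ∧ ∀ T' ⊆ M, ∑ v ∈ T', v = x → #T ≤ #T' := by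
  have hsum : ∃ T ⊆ M, ∑ v ∈ T, v = x := by
    obtain ⟨f, -, rfl⟩ := Submodule.mem_span_finset.1 hx
    refine ⟨{v ∈ M | f v = 1}, filter_subset _ _, ?_⟩
    rw [sum_filter]
    refine sum_congr rfl fun v _ => ?_
    obtain h | h : f v = 0 ∨ f v = 1 := by generalize f v = c; revert c; decide
    all_goals simp [h]
  obtain ⟨T₀, hT₀M, hT₀⟩ := hsum
  obtain ⟨T, hT, hmin⟩ := exists_min_image {T ∈ M.powerset | ∑ v ∈ T, v = x} card
    ⟨T₀, mem_filter.2 ⟨mem_powerset.2 hT₀M, hT₀⟩⟩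
  simp only [mem_filter, mem_powerset] at hT hmin
  exact ⟨T, hT.1, hT.2, fun T' hT'M hT' => hmin T' ⟨hT'M, hT'⟩⟩

theorem sum_notMem_of_min_card {M T S : Finset V} {x : V} (hTM : T ⊆ M) (hT : ∑ v ∈ T, v = x)
    (hmin : ∀ T' ⊆ M, ∑ v ∈ T', v = x → #T ≤ #T') (hST : S ⊆ T) (hS : 2 ≤ #S) :
    ∑ v ∈ S, v ∉ M := by
  intro hw
  set w := ∑ v ∈ S, v
  have hsum : ∑ v ∈ T \ S, v + w = x := by rw [sum_sdiff hST, hT]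
  have hcard : #(T \ S) + 2 ≤ #T := by
    rw [card_sdiff_of_subset hST]
    have := card_le_card hST
    omega
  by_cases hwTS : w ∈ T \ S
  · have hww : w + w = 0 := by
      rw [← two_smul (ZMod 2), show (2 : ZMod 2) = 0 from rfl, zero_smul]
    have := hmin ((T \ S).erase w) ((erase_subset _ _).trans (sdiff_subset.trans hTM))
      (by rw [← hsum, ← sum_erase_add _ _ hwTS, add_assoc, hww, add_zero])
    have := card_erase_le (a := w) (s := T \ S)
    omega
  · have := hmin (insert w (T \ S)) (insert_subset hw (sdiff_subset.trans hTM))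
      (by rw [sum_insert hwTS, add_comm, hsum])
    have := card_insert_le w (T \ S)
    omega

end ZModTwo

theorem stmt_1_general (n k : ℕ) (M : Finset (Fin n → ZMod 2))
    (h0 : (0 : Fin n → ZMod 2) ∈ M)
    (hbasis : ∃ B : Set (Fin n → ZMod 2), B ⊆ ↑M ∧
      LinearIndependent (ZMod 2) (fun v : B => (v : Fin n → ZMod 2)) ∧
      Submodule.span (ZMod 2) B = ⊤)
    (hlow : 2 * k < M.card)
    (hhigh : (M.card : ℝ) ^ k < 2 ^ n * (Nat.factorial (k - 1))) :
    ∃ K ⊆ M, K.card = k + 1 ∧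
      ∀ S ⊆ K, 2 ≤ S.card → (∑ v ∈ S, v) ∉ M := by
  classical
  set A := M.erase 0
  set shortSums := {T ∈ A.powerset | #T ≤ k}.image fun T => ∑ v ∈ T, v
  have hA : #A + 1 = #M := card_erase_add_one h0
  have hfew : #shortSums < 2 ^ n := by
    have hhigh' : #M ^ k < 2 ^ n * (k - 1)! := by exact_mod_cast hhigh
    have hbound := factorial_pred_mul_sum_range_choose_le_pow (k := k) (N := #A) (by omega)
    rw [hA] at hbound
    calc _ ≤ #{T ∈ A.powerset | #T ≤ k} := card_image_le
      _ = ∑ j ∈ range (k + 1), (#A).choose j := card_filter_card_le_powerset_eq_sum_choose A k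
      _ < 2 ^ n := Nat.lt_of_mul_lt_mul_left (a := (k - 1)!) (by linarith)
  obtain ⟨x, -, hx⟩ := exists_mem_notMem_of_card_lt_card (t := univ) (hfew.trans_eq (by simp))
  obtain ⟨B, hBM, -, hBspan⟩ := hbasis
  have hxM : x ∈ Submodule.span (ZMod 2) (M : Set (Fin n → ZMod 2)) :=
    Submodule.span_mono hBM (hBspan ▸ Submodule.mem_top)
  obtain ⟨T, hTM, hTx, hmin⟩ := exists_min_card_subset_sum_eq hxM
  have hTcard : k + 1 ≤ #T := by
    by_contra! hT
    refine hx (mem_image.2 ⟨T.erase 0, mem_filter.2 ⟨?_, ?_⟩, ?_⟩)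
    · exact mem_powerset.2 (erase_subset_erase 0 hTM)
    · exact card_erase_le.trans (by omega)
    · rw [sum_erase T (f := fun v => v) rfl, hTx]
  obtain ⟨K, hKT, hK⟩ := exists_subset_card_eq hTcard
  exact ⟨K, hKT.trans hTM, hK,
    fun S hSK hS => sum_notMem_of_min_card hTM hTx hmin (hSK.trans hKT) hS⟩

theorem stmt_1 (n k : ℕ) (hk : 0 < k) (M : Finset (Fin n → ZMod 2))
    (h0 : (0 : Fin n → ZMod 2) ∈ M)
    (hbasis : ∃ B : Set (Fin n → ZMod 2), B ⊆ ↑M ∧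
      LinearIndependent (ZMod 2) (fun v : B => (v : Fin n → ZMod 2)) ∧
      Submodule.span (ZMod 2) B = ⊤)
    (hlow : 2 * k < M.card)
    (hhigh : (M.card : ℝ) ^ k < 2 ^ n * (Nat.factorial (k - 1))) :
    ∃ K ⊆ M, K.card = k + 1 ∧
      ∀ S ⊆ K, 2 ≤ S.card → (∑ v ∈ S, v) ∉ M :=
  stmt_1_general n k M h0 hbasis hlow hhigh
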